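/- arXiv:1111.6820 — 5 statements merged into one kernel-verified Lean document; each statement's English description precedes it below -/
import Mathlib

section
/- Let H be a normal subgroup of finite p-power index in a group G. If h ∈ H is C_fp-separable in H, then h is C_fp-separable in G. -/
/-- An element `g` of a group `G` is `C_fp`-separable if for every `a ∈ G` not conjugate
to `g` in `G` there is a homomorphism of `G` onto a finite `p`-group under which the
images of `a` and `g` are not conjugate. -/
def CfpSep (p : ℕ) {G : Type} [Group G] (g : G) : Prop :=
  ∀ a : G, ¬ IsConj g a →
    ∃ (X : Type) (_ : Group X), Finite X ∧ IsPGroup p X ∧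
      ∃ φ : G →* X, Function.Surjective φ ∧ ¬ IsConj (φ g) (φ a)

/-- If `H` is a normal subgroup of `G` of finite `p`-power index and `h ∈ H` is
`C_fp`-separable in `H`, then `h` is `C_fp`-separable in `G`. -/
theorem cfpSep_of_cfpSep_normal_pPow_index (p : ℕ) (hp : p.Prime)
    (G : Type) [Group G] (H : Subgroup G) [H.Normal]
    (hindex : ∃ n : ℕ, H.index = p ^ n)
    (h : H) (hh : CfpSep p h) : CfpSep p (h : G) := by
  obtain ⟨n, hn⟩ := hindex
  haveI hfi : H.FiniteIndex := ⟨by rw [hn]; exact pow_ne_zero n hp.pos.ne'⟩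
  haveI : Fact p.Prime := ⟨hp⟩
  intro a ha
  by_cases haH : a ∈ H
  · -- main case: a ∈ H
    haveI : Finite (G ⧸ H) := H.finite_quotient_of_finiteIndex
    -- coset representatives
    let t : G ⧸ H → G := fun q => q.out
    have hdec : ∀ z : G, (t (QuotientGroup.mk z))⁻¹ * z ∈ H := fun z =>
      QuotientGroup.eq.mp (QuotientGroup.out_eq' (QuotientGroup.mk z : G ⧸ H))
    have hmem : ∀ (q : G ⧸ H) (x : G), x ∈ H → (t q)⁻¹ * x * t q ∈ H := fun q x hx => by
      simpa using Subgroup.Normal.conj_mem ‹H.Normal› x hx (t q)⁻¹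
    -- the conjugated copies of a
    let a'' : G ⧸ H → H := fun q => ⟨(t q)⁻¹ * a * t q, hmem q a haH⟩
    have hna : ∀ q, ¬ IsConj h (a'' q) := by
      intro q hc
      apply ha
      rw [isConj_iff] at hc ⊢
      obtain ⟨v, hv⟩ := hc
      refine ⟨t q * (v : G), ?_⟩
      have h2 : (v : G) * (h : G) * (v : G)⁻¹ = (t q)⁻¹ * a * t q := by
        have := congrArg Subtype.val hv
        simpa [a''] using this
      have h3 : t q * ((v : G) * (h : G) * (v : G)⁻¹) * (t q)⁻¹ = a := by
        rw [h2]; group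
      rw [← h3]; group
    -- choose separating homomorphisms for each coset
    choose P instP finP pgP φ φsurj hφ using fun q => hh (a'' q) (hna q)
    clear φsurj
    letI : ∀ q, Group (P q) := instP
    haveI : ∀ q, Finite (P q) := finP
    -- the kernel intersection K and its G-closure L
    let K : Subgroup H := ⨅ q, (φ q).ker
    have hK : ∀ x : H, x ∈ K ↔ ∀ q, φ q x = 1 := fun x => by
      simp [K, Subgroup.mem_iInf, MonoidHom.mem_ker]
    have hKnormal : K.Normal := by
      constructor
      intro x hx g
      rw [hK] at hx ⊢
      intro q
      rw [map_mul, map_mul, hx q, map_inv, mul_one, mul_inv_cancel]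
    let e : G ⧸ H → MulAut H := fun q => MulAut.conjNormal (t q)
    have ecoe : ∀ (q : G ⧸ H) (x : H), ((e q x : H) : G) = t q * (x : G) * (t q)⁻¹ :=
      fun q x => MulAut.conjNormal_apply (t q) x
    let KK : Subgroup H := ⨅ q, K.comap (e q).toMonoidHom
    let L : Subgroup G := KK.map H.subtype
    have memL : ∀ x : G, x ∈ L ↔ ∃ hx : x ∈ H, ∀ q, e q ⟨x, hx⟩ ∈ K := by
      intro x
      constructor
      · rintro ⟨y, hy, rfl⟩
        exact ⟨y.2, fun q => Subgroup.mem_comap.mp (Subgroup.mem_iInf.mp hy q)⟩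
      · rintro ⟨hx, hq⟩
        exact ⟨⟨x, hx⟩, Subgroup.mem_iInf.mpr fun q => Subgroup.mem_comap.mpr (hq q), rfl⟩
    have hLH : L ≤ H := Subgroup.map_subtype_le KK
    -- stability of L under conjugation by elements of H
    have stabH : ∀ (u : H) (x : G), x ∈ L → (u : G) * x * (u : G)⁻¹ ∈ L := by
      intro u x hx
      rw [memL] at hx ⊢
      obtain ⟨hxH, hxq⟩ := hx
      have hxH' : (u : G) * x * (u : G)⁻¹ ∈ H := H.mul_mem (H.mul_mem u.2 hxH) (H.inv_mem u.2)
      refine ⟨hxH', fun q => ?_⟩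
      have key : (⟨(u : G) * x * (u : G)⁻¹, hxH'⟩ : H) = u * ⟨x, hxH⟩ * u⁻¹ := rfl
      rw [key, map_mul, map_mul, map_inv]
      exact hKnormal.conj_mem _ (hxq q) (e q u)
    -- stability of L under conjugation by coset representatives
    have stabT : ∀ (q0 : G ⧸ H) (y : G), y ∈ L → t q0 * y * (t q0)⁻¹ ∈ L := by
      intro q0 y hy
      have hyH : y ∈ H := hLH hy
      rw [memL]
      have hH1 : t q0 * y * (t q0)⁻¹ ∈ H := Subgroup.Normal.conj_mem ‹H.Normal› y hyH (t q0)
      refine ⟨hH1, fun q => ?_⟩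
      have hvH : (t (QuotientGroup.mk (t q * t q0)))⁻¹ * (t q * t q0) ∈ H := hdec _
      set q' : G ⧸ H := QuotientGroup.mk (t q * t q0) with hq'
      set v : H := ⟨(t q')⁻¹ * (t q * t q0), hvH⟩ with hv
      obtain ⟨hH2, h2⟩ := (memL _).mp (stabH v y hy)
      have key : e q ⟨t q0 * y * (t q0)⁻¹, hH1⟩ = e q' ⟨(v : G) * y * (v : G)⁻¹, hH2⟩ := by
        apply Subtype.ext
        rw [ecoe, ecoe]
        show t q * (t q0 * y * (t q0)⁻¹) * (t q)⁻¹
          = t q' * ((t q')⁻¹ * (t q * t q0) * y * ((t q')⁻¹ * (t q * t q0))⁻¹) * (t q')⁻¹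
        group
      rw [key]
      exact h2 q'
    -- L is stable under all conjugation, hence normal
    have stabG : ∀ (g x : G), x ∈ L → g * x * g⁻¹ ∈ L := by
      intro g x hx
      have hu : (t (QuotientGroup.mk g))⁻¹ * g ∈ H := hdec g
      have h1 := stabT (QuotientGroup.mk g) _ (stabH ⟨_, hu⟩ x hx)
      have h2 : g * x * g⁻¹
          = t (QuotientGroup.mk g) * ((t (QuotientGroup.mk g))⁻¹ * g * x
            * ((t (QuotientGroup.mk g))⁻¹ * g)⁻¹) * (t (QuotientGroup.mk g))⁻¹ := by group
      rw [h2]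
      exact h1
    haveI hLnormal : L.Normal := ⟨fun x hx g => stabG g x hx⟩
    -- every G-conjugate of an element of L lies in (the image of) K
    have conjK : ∀ (g x : G), x ∈ L → ∃ hm : g * x * g⁻¹ ∈ H, (⟨g * x * g⁻¹, hm⟩ : H) ∈ K := by
      intro g x hx
      have hu : (t (QuotientGroup.mk g))⁻¹ * g ∈ H := hdec g
      obtain ⟨hH2, h2⟩ := (memL _).mp (stabH ⟨_, hu⟩ x hx)
      have hm : g * x * g⁻¹ ∈ H := by
        have := Subgroup.Normal.conj_mem ‹H.Normal› _ hH2 (t (QuotientGroup.mk g))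
        have hgx : g * x * g⁻¹
            = t (QuotientGroup.mk g) * ((t (QuotientGroup.mk g))⁻¹ * g * x
              * ((t (QuotientGroup.mk g))⁻¹ * g)⁻¹) * (t (QuotientGroup.mk g))⁻¹ := by group
        rw [hgx]; exact this
      refine ⟨hm, ?_⟩
      have key : (⟨g * x * g⁻¹, hm⟩ : H)
          = e (QuotientGroup.mk g) ⟨(t (QuotientGroup.mk g))⁻¹ * g * x
            * ((t (QuotientGroup.mk g))⁻¹ * g)⁻¹, hH2⟩ := by
        apply Subtype.ext
        rw [ecoe]
        show g * x * g⁻¹ = t (QuotientGroup.mk g) * ((t (QuotientGroup.mk g))⁻¹ * g * x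
          * ((t (QuotientGroup.mk g))⁻¹ * g)⁻¹) * (t (QuotientGroup.mk g))⁻¹
        group
      rw [key]
      exact h2 (QuotientGroup.mk g)
    -- finiteness of the index of L
    have hkerfi : ∀ q, (φ q).ker.FiniteIndex := fun q => by
      haveI : Finite (φ q).range := Subtype.finite
      exact Subgroup.finiteIndex_ker (φ q)
    haveI hKfi : K.FiniteIndex := Subgroup.finiteIndex_iInf hkerfi
    have hKKfi : KK.FiniteIndex := Subgroup.finiteIndex_iInf fun q => by
      have hsurj : Function.Surjective ((e q).toMonoidHom : H →* H) := (e q).surjective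
      have heq : (K.comap (e q).toMonoidHom).index = K.index :=
        Subgroup.index_comap_of_surjective K hsurj
      exact ⟨heq ▸ hKfi.index_ne_zero⟩
    have hrel : L.subgroupOf H = KK :=
      Subgroup.comap_map_eq_self_of_injective H.subtype_injective KK
    have hLindex : L.index = KK.index * H.index := by
      rw [← Subgroup.relIndex_mul_index hLH]
      congr 1
      show (L.subgroupOf H).index = KK.index
      rw [hrel]
    haveI hLfi : L.FiniteIndex := ⟨by
      rw [hLindex]
      exact mul_ne_zero hKKfi.index_ne_zero hfi.index_ne_zero⟩
    haveI : Finite (G ⧸ L) := L.finite_quotient_of_finiteIndex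
    -- the quotient is a p-group
    haveI : Fintype (G ⧸ H) := Fintype.ofFinite _
    have hcard : ∀ q, ∃ m : ℕ, Nat.card (P q) = p ^ m := fun q => IsPGroup.iff_card.mp (pgP q)
    choose k hk using hcard
    set N : ℕ := ∑ q : G ⧸ H, k q with hN
    have hdvd : ∀ q, Nat.card (P q) ∣ p ^ N := fun q => by
      rw [hk q]
      exact pow_dvd_pow p (Finset.single_le_sum (fun _ _ => Nat.zero_le _) (Finset.mem_univ q))
    have hpowL : ∀ y : G, y ∈ H → y ^ (p ^ N) ∈ L := by
      intro y hy
      rw [memL]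
      have h1 : y ^ (p ^ N) ∈ H := H.pow_mem hy _
      refine ⟨h1, fun q => ?_⟩
      have key : (⟨y ^ (p ^ N), h1⟩ : H) = (⟨y, hy⟩ : H) ^ (p ^ N) := by
        apply Subtype.ext
        simp
      rw [key, map_pow, hK]
      intro r
      rw [map_pow]
      exact orderOf_dvd_iff_pow_eq_one.mp ((orderOf_dvd_natCard _).trans (hdvd r))
    have hPQ : IsPGroup p (G ⧸ L) := by
      intro x
      obtain ⟨g, rfl⟩ := QuotientGroup.mk_surjective x
      refine ⟨n + N, ?_⟩
      have h1 : g ^ H.index ∈ H := H.pow_index_mem g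
      have h2 : (g ^ H.index) ^ (p ^ N) ∈ L := hpowL _ h1
      have h3 : (QuotientGroup.mk g : G ⧸ L) ^ (p ^ (n + N))
          = QuotientGroup.mk ((g ^ H.index) ^ (p ^ N)) := by
        rw [← pow_mul, ← QuotientGroup.mk_pow, hn, ← pow_add]
      rw [h3, QuotientGroup.eq_one_iff]
      exact h2
    -- assemble
    refine ⟨G ⧸ L, inferInstance, inferInstance, hPQ, QuotientGroup.mk' L,
      QuotientGroup.mk'_surjective L, ?_⟩
    intro hc
    rw [isConj_iff] at hc
    obtain ⟨c, hcq⟩ := hc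
    obtain ⟨g, rfl⟩ := QuotientGroup.mk_surjective c
    have hx : (g * (h : G) * g⁻¹)⁻¹ * a ∈ L := by
      apply QuotientGroup.eq.mp
      simpa using hcq
    obtain ⟨hm, hKmem⟩ := conjK (t (QuotientGroup.mk g))⁻¹ _ hx
    set q : G ⧸ H := QuotientGroup.mk g with hq
    have hu : (t q)⁻¹ * g ∈ H := hdec g
    have hxval : (⟨(t q)⁻¹ * ((g * (h : G) * g⁻¹)⁻¹ * a) * ((t q)⁻¹)⁻¹, hm⟩ : H)
        = ⟨(t q)⁻¹ * g, hu⟩ * h⁻¹ * ⟨(t q)⁻¹ * g, hu⟩⁻¹ * a'' q := by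
      apply Subtype.ext
      show (t q)⁻¹ * ((g * (h : G) * g⁻¹)⁻¹ * a) * ((t q)⁻¹)⁻¹
        = (t q)⁻¹ * g * (h : G)⁻¹ * ((t q)⁻¹ * g)⁻¹ * ((t q)⁻¹ * a * t q)
      group
    rw [hxval, hK] at hKmem
    have h1 := hKmem q
    rw [map_mul, map_mul, map_mul, map_inv, map_inv] at h1
    apply hφ q
    rw [isConj_iff]
    refine ⟨φ q ⟨(t q)⁻¹ * g, hu⟩, ?_⟩
    have h2 := inv_eq_of_mul_eq_one_right h1
    rw [← h2]
    simp [mul_inv_rev, mul_assoc]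
  · -- easy case: a ∉ H, separate via G ⧸ H
    haveI : Finite (G ⧸ H) := H.finite_quotient_of_finiteIndex
    refine ⟨G ⧸ H, inferInstance, inferInstance,
      IsPGroup.of_card (by rw [← Subgroup.index_eq_card, hn]), QuotientGroup.mk' H,
      QuotientGroup.mk'_surjective H, ?_⟩
    intro hc
    have h1 : QuotientGroup.mk' H (h : G) = 1 := (QuotientGroup.eq_one_iff _).mpr h.2
    rw [h1, isConj_iff] at hc
    obtain ⟨c, hc2⟩ := hc
    apply haH
    rw [← QuotientGroup.eq_one_iff a]
    simpa using hc2.symm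
end

section
/- Let G be a group, M a subgroup of G, and H a subgroup of G of finite index containing M. If M is separable in H (as a subset), then M is separable in G. -/
/-- A subset `M` of a group `G` is separable if every `a ∈ G` with `a ∉ M` can be
separated from `M` by a homomorphism of `G` onto a finite group. -/
def Separable' {G : Type} [Group G] (M : Set G) : Prop :=
  ∀ a : G, a ∉ M →
    ∃ (X : Type) (_ : Group X), Finite X ∧
      ∃ φ : G →* X, Function.Surjective φ ∧ φ a ∉ φ '' M

/-!
A point `a ∉ M` is separated from `M` by a finite quotient exactly when `a ∉ M N` for some
finite-index subgroup `N` (pass to the normal core of `N`, resp. take `N = ker φ`). For `a ∉ H`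
the subgroup `H` itself works, since `M ⊆ H`; for `a ∈ H` a finite-index subgroup of `H`
separating `a` from `M` inside `H` still has finite index in `G`.
-/

namespace Subgroup

instance finiteIndex_map_subtype {G : Type*} [Group G] {H : Subgroup G} [H.FiniteIndex]
    (K : Subgroup H) [K.FiniteIndex] : (K.map H.subtype).FiniteIndex :=
  ⟨by
    rw [index_map_subtype]
    exact mul_ne_zero FiniteIndex.index_ne_zero FiniteIndex.index_ne_zero⟩

end Subgroup

theorem separable'_iff_exists_finiteIndex {G : Type} [Group G] (S : Set G) :
    Separable' S ↔
      ∀ a ∉ S, ∃ N : Subgroup G, N.FiniteIndex ∧ ∀ s ∈ S, s⁻¹ * a ∉ N := by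
  refine forall₂_congr fun a _ ↦ ⟨?_, ?_⟩
  · rintro ⟨X, _, _, φ, -, hφa⟩
    refine ⟨φ.ker, Subgroup.finiteIndex_ker φ, fun s hs hsa ↦ hφa ⟨s, hs, ?_⟩⟩
    rwa [MonoidHom.mem_ker, map_mul, map_inv, inv_mul_eq_one] at hsa
  · rintro ⟨N, _, hN⟩
    refine ⟨G ⧸ N.normalCore, inferInstance, inferInstance, QuotientGroup.mk' _,
      QuotientGroup.mk'_surjective _, ?_⟩
    rintro ⟨s, hs, hsa⟩
    exact hN s hs (N.normalCore_le (QuotientGroup.eq.mp hsa))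

/-- If `M ≤ H ≤ G` with `[G : H]` finite and `M` is separable in `H`, then `M` is
separable in `G`. -/
theorem separable_of_separable_finiteIndex (G : Type) [Group G]
    (M H : Subgroup G) (hMH : M ≤ H) [H.FiniteIndex]
    (hsep : Separable' {x : H | (x : G) ∈ M}) :
    Separable' (M : Set G) := by
  rw [separable'_iff_exists_finiteIndex] at hsep ⊢
  intro a haM
  by_cases haH : a ∈ H
  · obtain ⟨N, _, hN⟩ := hsep ⟨a, haH⟩ haM
    refine ⟨N.map H.subtype, inferInstance, fun s hs ⟨y, hy, hya⟩ ↦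
      hN ⟨s, hMH hs⟩ hs ?_⟩
    rwa [show (⟨s, hMH hs⟩ : H)⁻¹ * ⟨a, haH⟩ = y from Subtype.ext hya.symm]
  · exact ⟨H, inferInstance, fun s hs hsa ↦ haH (by simpa using H.mul_mem (hMH hs) hsa)⟩
end

section
/- Let H and K be groups with central subgroups A ≤ Z(H) and B ≤ Z(K), and let φ : A → B be an isomorphism. Suppose A is p-separable in H, B is p-separable in K, and every finite p-power-index subgroup of A (resp. B) is p-separable in H (resp. K). Then for all normal subgroups M ⊴ H and N ⊴ K of finite p-power index, there exist (A,B,φ)-compatible normal subgroups R ⊴ H and S ⊴ K of finite p-power index with R ≤ M and S ≤ N. -/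
/-- A subset `M` of a group `G` is `p`-separable if every `a ∈ G` with `a ∉ M` can be
separated from `M` by a homomorphism of `G` onto a finite `p`-group. -/
def PSep (p : ℕ) {G : Type} [Group G] (M : Set G) : Prop :=
  ∀ a : G, a ∉ M →
    ∃ (X : Type) (_ : Group X), Finite X ∧ IsPGroup p X ∧
      ∃ φ : G →* X, Function.Surjective φ ∧ φ a ∉ φ '' M

/-- Normal subgroups `R ⊴ H` and `S ⊴ K` are `(A,B,φ)`-compatible if `φ` maps `A ∩ R`
onto `B ∩ S`. -/
def Compatible {H K : Type} [Group H] [Group K] (A : Subgroup H) (B : Subgroup K)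
    (φ : A ≃* B) (R : Subgroup H) (S : Subgroup K) : Prop :=
  (fun a : A => (φ a : K)) '' {a : A | (a : H) ∈ R} = ↑(B ⊓ S)

/-!
Put `U = A ∩ M ∩ φ⁻¹(B ∩ N)`, a subgroup of `p`-power index in `A`. Since `U` is `p`-separable
and `A / U` is finite, finitely many finite `p`-quotients of `H` separate `U` from a
representative of each nontrivial coset of `U` in `A`; if `W` is the intersection of their
kernels, then `R = U · (M ∩ W)` is normal
(as `U` is central), of `p`-power index, contained in `M`, and `A ∩ R = U`. Likewise we find `S`
with `B ∩ S = φ(U)`, and `R`, `S` are compatible.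
-/

namespace Subgroup

variable {p : ℕ} {G : Type} [Group G]

lemma normal_of_le_center {T : Subgroup G} (h : T ≤ center G) : T.Normal :=
  ⟨fun t ht g => by rwa [mem_center_iff.mp (h ht) g, mul_inv_cancel_right]⟩

lemma index_eq_prime_pow_of_le (hp : p.Prime) {R S : Subgroup G} (h : R ≤ S)
    (hR : ∃ n, R.index = p ^ n) : ∃ n, S.index = p ^ n := by
  obtain ⟨n, hn⟩ := hR
  obtain ⟨m, -, hm⟩ := (Nat.dvd_prime_pow hp).mp (hn ▸ index_dvd_of_le h)
  exact ⟨m, hm⟩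

lemma index_inf_eq_prime_pow (hp : p.Prime) {R S : Subgroup G} [R.Normal]
    (hR : ∃ n, R.index = p ^ n) (hS : ∃ n, S.index = p ^ n) :
    ∃ n, (R ⊓ S).index = p ^ n := by
  obtain ⟨n, hn⟩ := hR
  obtain ⟨m, hm⟩ := hS
  have hdvd : (R ⊓ S).index ∣ p ^ (n + m) := by
    rw [← relIndex_mul_index inf_le_right, inf_relIndex_right, pow_add, ← hn, ← hm]
    exact mul_dvd_mul_right (relIndex_dvd_index_of_normal R S) _
  obtain ⟨k, -, hk⟩ := (Nat.dvd_prime_pow hp).mp hdvd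
  exact ⟨k, hk⟩

lemma index_subgroupOf_eq_prime_pow (hp : p.Prime) {M : Subgroup G} [M.Normal] (C : Subgroup G)
    (hM : ∃ n, M.index = p ^ n) : ∃ n, (M.subgroupOf C).index = p ^ n := by
  obtain ⟨n, hn⟩ := hM
  obtain ⟨m, -, hm⟩ := (Nat.dvd_prime_pow hp).mp (hn ▸ relIndex_dvd_index_of_normal M C)
  exact ⟨m, hm⟩

end Subgroup

open Subgroup

variable {p : ℕ} {G : Type} [Group G]

lemma PSep.exists_normal_notMem_sup (hp : p.Prime) {T : Subgroup G} (hT : PSep p (T : Set G))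
    {a : G} (ha : a ∉ T) :
    ∃ W : Subgroup G, W.Normal ∧ (∃ n, W.index = p ^ n) ∧ a ∉ T ⊔ W := by
  have : Fact p.Prime := ⟨hp⟩
  obtain ⟨X, _, _, hX, ψ, hψ, hψa⟩ := hT a ha
  obtain ⟨n, hn⟩ := IsPGroup.iff_card.mp hX
  refine ⟨ψ.ker, ψ.normal_ker, ⟨n, ?_⟩, fun haW => hψa ?_⟩
  · rw [index_ker, ψ.range_eq_top_of_surjective hψ, card_top, hn]
  · obtain ⟨t, ht, w, hw, rfl⟩ := (Set.ext_iff.mp (mul_normal T ψ.ker) a).mp haW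
    exact ⟨t, ht, by rw [map_mul, ψ.mem_ker.mp hw, mul_one]⟩

lemma PSep.exists_normal_forall_notMem_sup (hp : p.Prime) {T : Subgroup G}
    (hT : PSep p (T : Set G)) {s : Set G} (hs : s.Finite) (hsT : ∀ a ∈ s, a ∉ T) :
    ∃ W : Subgroup G, W.Normal ∧ (∃ n, W.index = p ^ n) ∧ ∀ a ∈ s, a ∉ T ⊔ W := by
  induction s, hs using Set.Finite.induction_on with
  | empty => exact ⟨⊤, inferInstance, ⟨0, index_top⟩, fun _ h => h.elim⟩
  | @insert a s _ _ ih =>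
    obtain ⟨W₁, _, hW₁, haW₁⟩ := hT.exists_normal_notMem_sup hp (hsT a (Set.mem_insert a s))
    obtain ⟨W₂, _, hW₂, hsW₂⟩ := ih fun b hb => hsT b (Set.mem_insert_of_mem a hb)
    refine ⟨W₁ ⊓ W₂, inferInstance, index_inf_eq_prime_pow hp hW₁ hW₂, ?_⟩
    rintro b (rfl | hb) hbW
    · exact haW₁ (sup_le_sup_left inf_le_left T hbW)
    · exact hsW₂ b hb (sup_le_sup_left inf_le_right T hbW)

lemma exists_finite_reps_of_nontrivial_cosets (U : Subgroup G) [U.FiniteIndex] :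
    ∃ s : Set G, s.Finite ∧ (∀ b ∈ s, b ∉ U) ∧ ∀ a ∉ U, ∃ b ∈ s, a⁻¹ * b ∈ U := by
  refine ⟨Set.range (fun q : G ⧸ U => q.out) \ U, (Set.finite_range _).sdiff, fun b hb => hb.2,
    fun a ha => ?_⟩
  obtain ⟨u, hu⟩ := QuotientGroup.mk_out_eq_mul U a
  have hmem : a⁻¹ * (a : G ⧸ U).out ∈ U := by rw [hu, inv_mul_cancel_left]; exact u.2
  exact ⟨_, ⟨⟨_, rfl⟩, fun hout => ha (by simpa using mul_mem hout (inv_mem hmem))⟩, hmem⟩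

theorem exists_normal_inf_eq_map_subtype (hp : p.Prime) {C : Subgroup G} (U : Subgroup C)
    [U.FiniteIndex] [(U.map C.subtype).Normal] (hU : PSep p (U.map C.subtype : Set G))
    {M : Subgroup G} [M.Normal] (hM : ∃ n, M.index = p ^ n) (hUM : U.map C.subtype ≤ M) :
    ∃ R : Subgroup G, R.Normal ∧ (∃ n, R.index = p ^ n) ∧ R ≤ M ∧
      C ⊓ R = U.map C.subtype := by
  obtain ⟨s, hs, hsU, hreps⟩ := exists_finite_reps_of_nontrivial_cosets U
  obtain ⟨W, _, hW, hsW⟩ := hU.exists_normal_forall_notMem_sup hp (hs.image C.subtype)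
    (by rintro _ ⟨b, hb, rfl⟩; rw [mem_map_iff_mem C.subtype_injective]; exact hsU b hb)
  refine ⟨U.map C.subtype ⊔ (M ⊓ W), inferInstance,
    index_eq_prime_pow_of_le hp le_sup_right (index_inf_eq_prime_pow hp hM hW),
    sup_le hUM inf_le_left, le_antisymm ?_ (le_inf (map_subtype_le U) le_sup_left)⟩
  rintro a ⟨ha, haR⟩
  lift a to C using ha
  by_contra haU
  obtain ⟨b, hb, hab⟩ := hreps a (mt (mem_map_iff_mem C.subtype_injective).mpr haU)
  refine hsW b ⟨b, hb, rfl⟩ (sup_le_sup_left (inf_le_right : M ⊓ W ≤ W) _ ?_)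
  simpa using mul_mem haR (le_sup_left (b := M ⊓ W) (mem_map_of_mem C.subtype hab))

lemma compatible_of_inf_eq {H K : Type} [Group H] [Group K] {A : Subgroup H} {B : Subgroup K}
    (φ : A ≃* B) {R : Subgroup H} {S : Subgroup K} (U : Subgroup A)
    (hR : A ⊓ R = U.map A.subtype) (hS : B ⊓ S = (U.map (φ : A →* B)).map B.subtype) :
    Compatible A B φ R S := by
  have hU : {a : A | (a : H) ∈ R} = U := by
    ext a
    rw [Set.mem_ofPred_eq, SetLike.mem_coe, ← mem_map_iff_mem A.subtype_injective, ← hR]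
    exact ⟨fun h => ⟨a.2, h⟩, fun h => h.2⟩
  rw [Compatible, hU, hS, coe_map, coe_map, Set.image_image]
  rfl

theorem exists_compatible_normal_pPow_index_general (p : ℕ) (hp : p.Prime)
    {H K : Type} [Group H] [Group K]
    (A : Subgroup H) (B : Subgroup K) (φ : A ≃* B)
    (hA : A ≤ Subgroup.center H) (hB : B ≤ Subgroup.center K)
    (hAsub : ∀ U : Subgroup A, (∃ n : ℕ, U.index = p ^ n) →
      PSep p ((U.map A.subtype : Subgroup H) : Set H))
    (hBsub : ∀ V : Subgroup B, (∃ n : ℕ, V.index = p ^ n) →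
      PSep p ((V.map B.subtype : Subgroup K) : Set K)) :
    ∀ (M : Subgroup H) (N : Subgroup K), M.Normal → N.Normal →
      (∃ n : ℕ, M.index = p ^ n) → (∃ n : ℕ, N.index = p ^ n) →
      ∃ (R : Subgroup H) (S : Subgroup K), R.Normal ∧ S.Normal ∧
        (∃ n : ℕ, R.index = p ^ n) ∧ (∃ n : ℕ, S.index = p ^ n) ∧
        R ≤ M ∧ S ≤ N ∧ Compatible A B φ R S := by
  intro M N _ _ hM hN
  set U : Subgroup A := M.subgroupOf A ⊓ (N.subgroupOf B).comap (φ : A →* B)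
  have hU : ∃ n, U.index = p ^ n := index_inf_eq_prime_pow hp
    (index_subgroupOf_eq_prime_pow hp A hM)
    (by rw [index_comap_of_surjective _ φ.surjective]; exact index_subgroupOf_eq_prime_pow hp B hN)
  have hV : ∃ n, (U.map (φ : A →* B)).index = p ^ n := by rwa [index_map_equiv]
  have : U.FiniteIndex := ⟨by obtain ⟨n, hn⟩ := hU; simp [hn, hp.ne_zero]⟩
  have : (U.map (φ : A →* B)).FiniteIndex := ⟨by obtain ⟨n, hn⟩ := hV; simp [hn, hp.ne_zero]⟩
  have := normal_of_le_center ((map_subtype_le U).trans hA)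
  have := normal_of_le_center ((map_subtype_le (U.map (φ : A →* B))).trans hB)
  obtain ⟨R, hRn, hRidx, hRM, hR⟩ := exists_normal_inf_eq_map_subtype hp U (hAsub U hU) hM
    (map_le_iff_le_comap.mpr inf_le_left)
  obtain ⟨S, hSn, hSidx, hSN, hS⟩ := exists_normal_inf_eq_map_subtype hp _ (hBsub _ hV) hN
    (map_le_iff_le_comap.mpr (map_le_iff_le_comap.mpr inf_le_right))
  exact ⟨R, S, hRn, hSn, hRidx, hSidx, hRM, hSN, compatible_of_inf_eq φ U hR hS⟩

/-- Proposition 3.2: under the separability hypotheses on the central subgroups `A`, `B`,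
any pair of finite `p`-power-index normal subgroups `M ⊴ H`, `N ⊴ K` contains a pair of
`(A,B,φ)`-compatible finite `p`-power-index normal subgroups. -/
theorem exists_compatible_normal_pPow_index (p : ℕ) (hp : p.Prime)
    {H K : Type} [Group H] [Group K]
    (A : Subgroup H) (B : Subgroup K) (φ : A ≃* B)
    (hA : A ≤ Subgroup.center H) (hB : B ≤ Subgroup.center K)
    (hAsep : PSep p (A : Set H)) (hBsep : PSep p (B : Set K))
    (hAsub : ∀ U : Subgroup A, (∃ n : ℕ, U.index = p ^ n) →
      PSep p ((U.map A.subtype : Subgroup H) : Set H))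
    (hBsub : ∀ V : Subgroup B, (∃ n : ℕ, V.index = p ^ n) →
      PSep p ((V.map B.subtype : Subgroup K) : Set K)) :
    ∀ (M : Subgroup H) (N : Subgroup K), M.Normal → N.Normal →
      (∃ n : ℕ, M.index = p ^ n) → (∃ n : ℕ, N.index = p ^ n) →
      ∃ (R : Subgroup H) (S : Subgroup K), R.Normal ∧ S.Normal ∧
        (∃ n : ℕ, R.index = p ^ n) ∧ (∃ n : ℕ, S.index = p ^ n) ∧
        R ≤ M ∧ S ≤ N ∧ Compatible A B φ R S :=
  exists_compatible_normal_pPow_index_general p hp A B φ hA hB hAsub hBsub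
end

section
/- Let G = H *_φ K be the free product of H and K amalgamated over central subgroups A ≤ Z(H) and B ≤ Z(K) via an isomorphism φ : A → B. If x and y are cyclically reduced elements of G of length greater than 1 whose syllable lengths are equal, then x and y are conjugate in G if and only if y equals some cyclic permutation of x. -/
/-- `G` together with `ιH, ιK` is the pushout of `f : A →* H` and `g : A →* K`,
characterized by its universal property. -/
def IsPushout {A H K G : Type} [Group A] [Group H] [Group K] [Group G]
    (f : A →* H) (g : A →* K) (ιH : H →* G) (ιK : K →* G) : Prop :=
  (∀ a : A, ιH (f a) = ιK (g a)) ∧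
  ∀ (X : Type) [Group X], ∀ (fH : H →* X) (fK : K →* X),
    (∀ a : A, fH (f a) = fK (g a)) →
      ∃! ρ : G →* X, ρ.comp ιH = fH ∧ ρ.comp ιK = fK

/-- `G` together with `ιH, ιK` is the free product of `H` and `K` with the subgroups
`A ≤ H` and `B ≤ K` amalgamated via the isomorphism `φ : A ≃* B`. -/
def IsAmalgam {H K G : Type} [Group H] [Group K] [Group G]
    (A : Subgroup H) (B : Subgroup K) (φ : A ≃* B)
    (ιH : H →* G) (ιK : K →* G) : Prop :=
  IsPushout A.subtype (B.subtype.comp φ.toMonoidHom) ιH ιK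

/-- The element of `G` represented by a list of syllables from the factors `H`, `K`. -/
def prodOf {H K G : Type} [Group H] [Group K] [Group G]
    (ιH : H →* G) (ιK : K →* G) (L : List (H ⊕ K)) : G :=
  (L.map (Sum.elim (fun h => ιH h) (fun k => ιK k))).prod

/-- A nonempty list of syllables is a reduced form: consecutive syllables come from
different factors, and if the length exceeds `1` no syllable lies in the amalgamated
subgroups `A`, `B`. -/
def Reduced {H K : Type} [Group H] [Group K] (A : Subgroup H) (B : Subgroup K)
    (L : List (H ⊕ K)) : Prop :=
  L ≠ [] ∧ L.Chain' (fun x y => x.isLeft ≠ y.isLeft) ∧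
  (1 < L.length → ∀ s ∈ L,
    (∀ h, s = Sum.inl h → h ∉ A) ∧ (∀ k, s = Sum.inr k → k ∉ B))

/-- A reduced form is cyclically reduced if it has length `1`, or its first and last
syllables come from different factors. -/
def CyclicallyReduced {H K : Type} [Group H] [Group K] (A : Subgroup H) (B : Subgroup K)
    (L : List (H ⊕ K)) : Prop :=
  Reduced A B L ∧ (1 < L.length → ∃ x y, L.head? = some x ∧ L.getLast? = some y ∧
    x.isLeft ≠ y.isLeft)

/-!
The amalgamated subgroup is central in `G`, so every element of `G` is a central element
times a strictly reduced word `c`, and only `c` matters for conjugation. Conjugate `x` by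
`c = c' s` one syllable at a time, innermost first. As `x` is cyclically reduced, `s` lies in
the factor of the first or of the last syllable of `x`. Either `s` cancels
against that syllable up to an amalgamated, hence central, element, and `s x s⁻¹` is a cyclic
permutation of `x`; or nothing cancels, and the conjugate is represented by the reduced word
`c' (s x₁) x₂ ⋯ xₙ s⁻¹ c'⁻¹`, which is longer than `x`. Reduced words representing the same
element have the same length (the normal form theorem, via `Monoid.PushoutI`), so the second
alternative cannot produce `y`.
-/

namespace AmalgamConj

variable {H K G : Type}

theorem isChain_isLeft_iff {L : List (H ⊕ K)} :
    L.IsChain (fun x y => x.isLeft ≠ y.isLeft) ↔ (L.map Sum.isLeft).IsChain (· ≠ ·) :=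
  (List.isChain_map _).symm

variable [Group H] [Group K] [Group G]

def InAmalg (A : Subgroup H) (B : Subgroup K) : H ⊕ K → Prop :=
  Sum.elim (· ∈ A) (· ∈ B)

def syl (ιH : H →* G) (ιK : K →* G) : H ⊕ K → G :=
  Sum.elim ιH ιK

def sprod : H ⊕ K → H ⊕ K → H ⊕ K
  | .inl a, .inl b => .inl (a * b)
  | .inr a, .inr b => .inr (a * b)
  | s, _ => s

def sinv : H ⊕ K → H ⊕ K :=
  Sum.map (·⁻¹) (·⁻¹)

def invRev (L : List (H ⊕ K)) : List (H ⊕ K) :=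
  (L.map sinv).reverse

/-- Unlike `Reduced`, this allows the empty word and forbids amalgamated syllables even in
words of length one. -/
def StrictlyReduced (A : Subgroup H) (B : Subgroup K) (L : List (H ⊕ K)) : Prop :=
  L.IsChain (fun x y => x.isLeft ≠ y.isLeft) ∧ ∀ s ∈ L, ¬InAmalg A B s

def StrictlyCyclicallyReduced (A : Subgroup H) (B : Subgroup K) (L : List (H ⊕ K)) : Prop :=
  Cycle.Chain (fun x y => x.isLeft ≠ y.isLeft) (L : Cycle (H ⊕ K)) ∧ ∀ s ∈ L, ¬InAmalg A B s

section Syllables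

variable (ιH : H →* G) (ιK : K →* G)

@[simp] theorem prodOf_nil : prodOf ιH ιK ([] : List (H ⊕ K)) = 1 := rfl

@[simp] theorem prodOf_cons (s : H ⊕ K) (L : List (H ⊕ K)) :
    prodOf ιH ιK (s :: L) = syl ιH ιK s * prodOf ιH ιK L :=
  List.prod_cons

@[simp] theorem prodOf_singleton (s : H ⊕ K) : prodOf ιH ιK [s] = syl ιH ιK s := by
  simp [prodOf, syl]

@[simp] theorem prodOf_append (L₁ L₂ : List (H ⊕ K)) :
    prodOf ιH ιK (L₁ ++ L₂) = prodOf ιH ιK L₁ * prodOf ιH ιK L₂ := by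
  simp [prodOf]

@[simp] theorem syl_sinv (s : H ⊕ K) : syl ιH ιK (sinv s) = (syl ιH ιK s)⁻¹ := by
  cases s <;> simp [syl, sinv]

theorem syl_sprod {s t : H ⊕ K} (h : s.isLeft = t.isLeft) :
    syl ιH ιK (sprod s t) = syl ιH ιK s * syl ιH ιK t := by
  cases s <;> cases t <;> simp_all [syl, sprod]

@[simp] theorem prodOf_invRev (L : List (H ⊕ K)) :
    prodOf ιH ιK (invRev L) = (prodOf ιH ιK L)⁻¹ := by
  induction L with
  | nil => simp [invRev]
  | cons s L ih => simp [← ih, invRev]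

theorem isConj_prodOf_rotate (L : List (H ⊕ K)) (n : ℕ) :
    IsConj (prodOf ιH ιK L) (prodOf ιH ιK (L.rotate n)) := by
  rw [List.rotate_eq_drop_append_take_mod, prodOf_append]
  conv_lhs => rw [← List.take_append_drop (n % L.length) L, prodOf_append]
  exact isConj_iff.2 ⟨(prodOf ιH ιK (L.take (n % L.length)))⁻¹, by group⟩

end Syllables

@[simp] theorem isLeft_sinv (s : H ⊕ K) : (sinv s).isLeft = s.isLeft := by
  cases s <;> rfl

@[simp] theorem isLeft_sprod (s t : H ⊕ K) : (sprod s t).isLeft = s.isLeft := by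
  cases s <;> cases t <;> rfl

@[simp] theorem map_isLeft_invRev (L : List (H ⊕ K)) :
    (invRev L).map Sum.isLeft = (L.map Sum.isLeft).reverse := by
  simp [invRev, Function.comp_def]

variable {A : Subgroup H} {B : Subgroup K}

@[simp] theorem inAmalg_sinv {s : H ⊕ K} : InAmalg A B (sinv s) ↔ InAmalg A B s := by
  cases s <;> simp [InAmalg, sinv]

namespace StrictlyReduced

theorem of_map_isLeft_eq {L L' : List (H ⊕ K)} (h : StrictlyReduced A B L)
    (hside : L'.map Sum.isLeft = L.map Sum.isLeft) (hmem : ∀ s ∈ L', ¬InAmalg A B s) :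
    StrictlyReduced A B L' :=
  ⟨isChain_isLeft_iff.2 (hside ▸ isChain_isLeft_iff.1 h.1), hmem⟩

theorem left_of_append {L L' : List (H ⊕ K)} (h : StrictlyReduced A B (L ++ L')) :
    StrictlyReduced A B L :=
  ⟨h.1.left_of_append, fun t ht => h.2 t (List.mem_append_left L' ht)⟩

theorem tail {s : H ⊕ K} {L : List (H ⊕ K)} (h : StrictlyReduced A B (s :: L)) :
    StrictlyReduced A B L :=
  ⟨h.1.tail, fun t ht => h.2 t (List.mem_cons_of_mem s ht)⟩

theorem cons {s t : H ⊕ K} {L : List (H ⊕ K)} (h : StrictlyReduced A B (t :: L))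
    (hst : s.isLeft ≠ t.isLeft) (hs : ¬InAmalg A B s) : StrictlyReduced A B (s :: t :: L) :=
  ⟨List.isChain_cons_cons.2 ⟨hst, h.1⟩, by simpa [hs] using h.2⟩

theorem invRev {L : List (H ⊕ K)} (h : StrictlyReduced A B L) :
    StrictlyReduced A B (AmalgamConj.invRev L) :=
  ⟨isChain_isLeft_iff.2 <| by
      rw [map_isLeft_invRev, List.isChain_reverse]
      exact (isChain_isLeft_iff.1 h.1).imp fun _ _ => Ne.symm,
    fun s hs => by
      obtain ⟨t, ht, rfl⟩ := List.mem_map.1 (List.mem_reverse.1 hs)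
      simpa using h.2 t ht⟩

end StrictlyReduced

namespace StrictlyCyclicallyReduced

theorem rotated {L L' : List (H ⊕ K)} (h : StrictlyCyclicallyReduced A B L) (hr : L ~r L') :
    StrictlyCyclicallyReduced A B L' :=
  ⟨Cycle.coe_eq_coe.2 hr ▸ h.1, fun s hs => h.2 s (hr.perm.mem_iff.2 hs)⟩

theorem strictlyReduced {L : List (H ⊕ K)} (h : StrictlyCyclicallyReduced A B L) :
    StrictlyReduced A B L := by
  refine ⟨?_, h.2⟩
  rcases L with _ | ⟨a, l⟩
  · exact List.IsChain.nil
  · exact ((Cycle.chain_coe_cons _ a l).1 h.1).prefix (by simp)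

theorem isLeft_ne {a b : H ⊕ K} {l : List (H ⊕ K)}
    (h : StrictlyCyclicallyReduced A B (a :: l ++ [b])) : a.isLeft ≠ b.isLeft := by
  have := (h.rotated (List.isRotated_concat b (a :: l))).1
  rw [Cycle.chain_coe_cons] at this
  exact fun hab => (List.isChain_cons_cons.1 this).1 hab.symm

theorem ne_singleton {b : H ⊕ K} : ¬StrictlyCyclicallyReduced A B [b] :=
  fun h => (Cycle.chain_singleton _ b).1 h.1 rfl

end StrictlyCyclicallyReduced

theorem _root_.Reduced.strictlyReduced {L : List (H ⊕ K)} (h : Reduced A B L)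
    (hL : 1 < L.length) : StrictlyReduced A B L := by
  refine ⟨h.2.1, fun s hs => ?_⟩
  cases s with
  | inl x => exact (h.2.2 hL _ hs).1 x rfl
  | inr x => exact (h.2.2 hL _ hs).2 x rfl

theorem _root_.CyclicallyReduced.strictlyCyclicallyReduced {L : List (H ⊕ K)}
    (h : CyclicallyReduced A B L) (hL : 1 < L.length) : StrictlyCyclicallyReduced A B L := by
  refine ⟨?_, (h.1.strictlyReduced hL).2⟩
  obtain ⟨a, l, rfl⟩ := List.exists_cons_of_ne_nil h.1.1
  obtain ⟨x, y, hx, hy, hay⟩ := h.2 hL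
  obtain rfl : a = x := Option.some.inj hx
  rw [Cycle.chain_coe_cons, ← List.cons_append, List.isChain_append]
  refine ⟨h.1.2.1, List.isChain_singleton a, fun z hz w hw => ?_⟩
  rw [hy, Option.mem_some_iff] at hz
  rw [List.head?_singleton, Option.mem_some_iff] at hw
  exact hz ▸ hw ▸ hay.symm

section Amalgam

variable {φ : A ≃* B} {ιH : H →* G} {ιK : K →* G}

theorem _root_.IsAmalgam.closure_range_union_eq_top (hG : IsAmalgam A B φ ιH ιK) :
    Subgroup.closure (Set.range ιH ∪ Set.range ιK) = ⊤ := by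
  set S := Subgroup.closure (Set.range ιH ∪ Set.range ιK)
  obtain ⟨ρ, ⟨hρH, hρK⟩, -⟩ := hG.2 S
    (ιH.codRestrict S fun h => Subgroup.subset_closure (Or.inl ⟨h, rfl⟩))
    (ιK.codRestrict S fun k => Subgroup.subset_closure (Or.inr ⟨k, rfl⟩))
    fun a => Subtype.ext (hG.1 a)
  have hid : S.subtype.comp ρ = MonoidHom.id G :=
    (hG.2 G ιH ιK hG.1).unique
      ⟨by rw [MonoidHom.comp_assoc, hρH]; rfl, by rw [MonoidHom.comp_assoc, hρK]; rfl⟩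
      ⟨rfl, rfl⟩
  refine eq_top_iff.2 fun g _ => ?_
  rw [← MonoidHom.id_apply G g, ← hid]
  exact (ρ g).2

theorem _root_.IsAmalgam.map_mem_center (hG : IsAmalgam A B φ ιH ιK)
    (hA : A ≤ Subgroup.center H) (hB : B ≤ Subgroup.center K) (a : A) :
    ιH a ∈ Subgroup.center G := by
  refine Subgroup.mem_center_iff.2 fun g => ?_
  have hgen : Set.range ιH ∪ Set.range ιK ⊆ Subgroup.centralizer {ιH (a : H)} := by
    rintro _ (⟨h, rfl⟩ | ⟨k, rfl⟩) _ rfl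
    · rw [← map_mul, ← map_mul, Subgroup.mem_center_iff.1 (hA a.2) h]
    · have hφ : ιH a = ιK (φ a) := hG.1 a
      rw [hφ, ← map_mul, ← map_mul, Subgroup.mem_center_iff.1 (hB (φ a).2) k]
  have hg : g ∈ Subgroup.closure (Set.range ιH ∪ Set.range ιK) :=
    hG.closure_range_union_eq_top ▸ Subgroup.mem_top g
  exact ((Subgroup.closure_le _ |>.2 hgen hg) _ rfl).symm

theorem _root_.IsAmalgam.syl_mem_center (hG : IsAmalgam A B φ ιH ιK)
    (hA : A ≤ Subgroup.center H) (hB : B ≤ Subgroup.center K) {u : H ⊕ K}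
    (hu : InAmalg A B u) : syl ιH ιK u ∈ Subgroup.center G := by
  cases u with
  | inl h => exact hG.map_mem_center hA hB ⟨h, hu⟩
  | inr k =>
    have hk : ιH (φ.symm ⟨k, hu⟩) = ιK k := by simpa using hG.1 (φ.symm ⟨k, hu⟩)
    exact (hk ▸ hG.map_mem_center hA hB (φ.symm ⟨k, hu⟩) :)

theorem _root_.IsAmalgam.exists_syl_mul_prodOf_eq (hG : IsAmalgam A B φ ιH ιK)
    (hA : A ≤ Subgroup.center H) (hB : B ≤ Subgroup.center K) (s : H ⊕ K)
    {L : List (H ⊕ K)} (hL : StrictlyReduced A B L) :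
    ∃ z ∈ Subgroup.center G, ∃ L', StrictlyReduced A B L' ∧
      syl ιH ιK s * prodOf ιH ιK L = z * prodOf ιH ιK L' := by
  by_cases hs : InAmalg A B s
  · exact ⟨_, hG.syl_mem_center hA hB hs, L, hL, rfl⟩
  rcases L with _ | ⟨t, L⟩
  · exact ⟨1, one_mem _, [s], ⟨List.isChain_singleton s, by simpa using hs⟩, by simp⟩
  by_cases hst : s.isLeft = t.isLeft
  · by_cases hv : InAmalg A B (sprod s t)
    · exact ⟨_, hG.syl_mem_center hA hB hv, L, hL.tail, by simp [syl_sprod _ _ hst, mul_assoc]⟩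
    · refine ⟨1, one_mem _, sprod s t :: L, hL.of_map_isLeft_eq (by simp [hst]) ?_,
        by simp [syl_sprod _ _ hst, mul_assoc]⟩
      simpa [hv] using fun u hu => hL.2 u (List.mem_cons_of_mem t hu)
  · exact ⟨1, one_mem _, s :: t :: L, hL.cons hst hs, by simp⟩

theorem _root_.IsAmalgam.exists_center_mul_prodOf (hG : IsAmalgam A B φ ιH ιK)
    (hA : A ≤ Subgroup.center H) (hB : B ≤ Subgroup.center K) (g : G) :
    ∃ z ∈ Subgroup.center G, ∃ L, StrictlyReduced A B L ∧ g = z * prodOf ιH ιK L := by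
  set S : Set G :=
    {g | ∃ z ∈ Subgroup.center G, ∃ L, StrictlyReduced A B L ∧ g = z * prodOf ιH ιK L}
  have hstep : ∀ s, ∀ g ∈ S, syl ιH ιK s * g ∈ S := by
    rintro s _ ⟨z, hz, L, hL, rfl⟩
    obtain ⟨z', hz', L', hL', he⟩ := hG.exists_syl_mul_prodOf_eq hA hB s hL
    refine ⟨z * z', mul_mem hz hz', L', hL', ?_⟩
    rw [← mul_assoc, Subgroup.mem_center_iff.1 hz, mul_assoc, he, mul_assoc]
  have hg : g ∈ Subgroup.closure (Set.range ιH ∪ Set.range ιK) :=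
    hG.closure_range_union_eq_top ▸ Subgroup.mem_top g
  change g ∈ S
  induction hg using Subgroup.closure_induction_left with
  | one => exact ⟨1, one_mem _, [], ⟨List.IsChain.nil, by simp⟩, by simp⟩
  | mul_left x hx y _ ih =>
    rcases hx with ⟨h, rfl⟩ | ⟨k, rfl⟩
    exacts [hstep (.inl h) y ih, hstep (.inr k) y ih]
  | inv_mul_cancel x hx y _ ih =>
    rcases hx with ⟨h, rfl⟩ | ⟨k, rfl⟩
    · rw [← map_inv]; exact hstep (.inl h⁻¹) y ih
    · rw [← map_inv]; exact hstep (.inr k⁻¹) y ih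

end Amalgam

/-! `Monoid.PushoutI` of the `Bool`-indexed family `H`, `K` is a second model of the amalgam,
and it comes with Mathlib's normal form theorem. -/

theorem _root_.Monoid.PushoutI.Reduced.length_eq_of_prod_eq {ι : Type*} {F : ι → Type*}
    [∀ i, Group (F i)] {C : Type*} [Group C] {ψ : ∀ i, C →* F i}
    (hψ : ∀ i, Function.Injective (ψ i)) {w₁ w₂ : Monoid.CoprodI.Word F}
    (h₁ : Monoid.PushoutI.Reduced ψ w₁) (h₂ : Monoid.PushoutI.Reduced ψ w₂)
    (hp : Monoid.PushoutI.ofCoprodI (φ := ψ) w₁.prod = Monoid.PushoutI.ofCoprodI w₂.prod) :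
    w₁.toList.length = w₂.toList.length := by
  obtain ⟨d⟩ := Monoid.PushoutI.NormalWord.transversal_nonempty ψ hψ
  obtain ⟨n₁, hn₁, hm₁⟩ := h₁.exists_normalWord_prod_eq d
  obtain ⟨n₂, hn₂, hm₂⟩ := h₂.exists_normalWord_prod_eq d
  have hn : n₁ = n₂ := Monoid.PushoutI.NormalWord.prod_injective (by rw [hn₁, hn₂, hp])
  rw [← List.length_map (f := Sigma.fst), ← hm₁, hn, hm₂, List.length_map]

section Model

def factor (H K : Type) : Bool → Type
  | true => H
  | false => K

instance : ∀ b, Group (factor H K b)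
  | true => ‹Group H›
  | false => ‹Group K›

def amalgDiagram (A : Subgroup H) (B : Subgroup K) (φ : A ≃* B) : ∀ b, A →* factor H K b
  | true => A.subtype
  | false => B.subtype.comp φ.toMonoidHom

theorem amalgDiagram_injective (φ : A ≃* B) : ∀ b, Function.Injective (amalgDiagram A B φ b)
  | true => A.subtype_injective
  | false => B.subtype_injective.comp φ.injective

def toSigma : H ⊕ K → Σ b, factor H K b :=
  Sum.elim (⟨true, ·⟩) (⟨false, ·⟩)

def StrictlyReduced.toWord {L : List (H ⊕ K)} (h : StrictlyReduced A B L) :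
    Monoid.CoprodI.Word (factor H K) where
  toList := L.map toSigma
  ne_one := by
    simp only [List.mem_map]
    rintro _ ⟨s, hs, rfl⟩ h1
    apply h.2 s hs
    cases s with
    | inl x => exact (show x = 1 from h1) ▸ A.one_mem
    | inr x => exact (show x = 1 from h1) ▸ B.one_mem
  chain_ne := by
    rw [List.isChain_map]
    exact h.1.imp fun a b hne => by cases a <;> cases b <;> simp_all [toSigma]

theorem StrictlyReduced.toWord_reduced {L : List (H ⊕ K)} (h : StrictlyReduced A B L)
    (φ : A ≃* B) : Monoid.PushoutI.Reduced (amalgDiagram A B φ) h.toWord := by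
  simp only [Monoid.PushoutI.Reduced, StrictlyReduced.toWord, List.mem_map]
  rintro _ ⟨s, hs, rfl⟩ ⟨a, ha⟩
  apply h.2 s hs
  cases s with
  | inl x => exact (show (a : H) = x from ha) ▸ a.2
  | inr x => exact (show ((φ a : B) : K) = x from ha) ▸ (φ a).2

theorem StrictlyReduced.ofCoprodI_toWord_prod {L : List (H ⊕ K)} (h : StrictlyReduced A B L)
    (φ : A ≃* B) :
    Monoid.PushoutI.ofCoprodI (φ := amalgDiagram A B φ) h.toWord.prod =
      prodOf (Monoid.PushoutI.of (φ := amalgDiagram A B φ) true)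
        (Monoid.PushoutI.of (φ := amalgDiagram A B φ) false) L := by
  simp only [Monoid.CoprodI.Word.prod, StrictlyReduced.toWord, prodOf, map_list_prod,
    List.map_map]
  congr 1
  refine List.map_congr_left fun s _ => ?_
  cases s <;> exact Monoid.PushoutI.ofCoprodI_of _ _

variable {φ : A ≃* B} {ιH : H →* G} {ιK : K →* G}

theorem _root_.IsAmalgam.length_eq_of_prodOf_eq (hG : IsAmalgam A B φ ιH ιK)
    {L₁ L₂ : List (H ⊕ K)} (h₁ : StrictlyReduced A B L₁) (h₂ : StrictlyReduced A B L₂)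
    (hp : prodOf ιH ιK L₁ = prodOf ιH ιK L₂) : L₁.length = L₂.length := by
  obtain ⟨ρ, ⟨hρH, hρK⟩, -⟩ := hG.2 _ (Monoid.PushoutI.of (φ := amalgDiagram A B φ) true)
    (Monoid.PushoutI.of (φ := amalgDiagram A B φ) false) fun a =>
      (Monoid.PushoutI.of_apply_eq_base _ true a).trans
        (Monoid.PushoutI.of_apply_eq_base _ false a).symm
  have hρ : ∀ L, ρ (prodOf ιH ιK L) = prodOf (Monoid.PushoutI.of (φ := amalgDiagram A B φ) true)
      (Monoid.PushoutI.of (φ := amalgDiagram A B φ) false) L := by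
    intro L
    simp only [prodOf, map_list_prod, List.map_map]
    congr 1
    refine List.map_congr_left fun s _ => ?_
    cases s
    exacts [DFunLike.congr_fun hρH _, DFunLike.congr_fun hρK _]
  simpa [StrictlyReduced.toWord] using (h₁.toWord_reduced φ).length_eq_of_prod_eq
    (amalgDiagram_injective φ) (h₂.toWord_reduced φ) (by
      rw [h₁.ofCoprodI_toWord_prod, h₂.ofCoprodI_toWord_prod, ← hρ, ← hρ, hp])

end Model

section Conjugation

variable {φ : A ≃* B} {ιH : H →* G} {ιK : K →* G}

variable (A B ιH ιK) in
def RotatesOrLengthens (g : G) (x : List (H ⊕ K)) : Prop :=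
  ∃ W, StrictlyReduced A B W ∧ prodOf ιH ιK W = g * prodOf ιH ιK x * g⁻¹ ∧
    (x ~r W ∨ x.length < W.length)

theorem RotatesOrLengthens.mul_of_isRotated {g k : G} {x x' : List (H ⊕ K)}
    (h : RotatesOrLengthens A B ιH ιK g x') (hr : x ~r x')
    (hk : prodOf ιH ιK x' = k * prodOf ιH ιK x * k⁻¹) :
    RotatesOrLengthens A B ιH ιK (g * k) x := by
  obtain ⟨W, hW, hWp, hWx⟩ := h
  refine ⟨W, hW, by rw [hWp, hk]; group, ?_⟩
  rw [hr.perm.length_eq]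
  exact hWx.imp_left hr.trans

theorem strictlyReduced_sandwich {c l : List (H ⊕ K)} {s a v : H ⊕ K}
    (hc : StrictlyReduced A B (c ++ [s])) (hx : StrictlyCyclicallyReduced A B (a :: l))
    (hsa : s.isLeft = a.isLeft) (hva : v.isLeft = a.isLeft) (hv : ¬InAmalg A B v) :
    StrictlyReduced A B (c ++ v :: l ++ invRev (c ++ [s])) := by
  refine ⟨isChain_isLeft_iff.2 ?_, ?_⟩
  · have h₁ := isChain_isLeft_iff.1 hc.1
    have h₂ := isChain_isLeft_iff.1 ((Cycle.chain_coe_cons _ a l).1 hx.1)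
    have h₃ := isChain_isLeft_iff.1 hc.invRev.1
    simp only [List.map_append, List.map_cons, List.map_nil, map_isLeft_invRev,
      List.reverse_append, List.reverse_singleton, hsa, hva] at h₁ h₂ h₃ ⊢
    have h₁₂ : (c.map Sum.isLeft ++ [a.isLeft] ++ l.map Sum.isLeft ++ [a.isLeft]).IsChain
        (· ≠ ·) := by
      simpa using h₁.append_overlap h₂ (by simp)
    simpa using h₁₂.append_overlap h₃ (by simp)
  · intro t ht
    simp only [List.mem_append, List.mem_cons] at ht
    rcases ht with (ht | rfl | ht) | ht
    · exact hc.2 t (by simp [ht])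
    · exact hv
    · exact hx.2 t (by simp [ht])
    · exact hc.invRev.2 t ht

theorem rotatesOrLengthens_of_not_inAmalg_sprod {c l : List (H ⊕ K)} {s a : H ⊕ K}
    (hc : StrictlyReduced A B (c ++ [s])) (hx : StrictlyCyclicallyReduced A B (a :: l))
    (hsa : s.isLeft = a.isLeft) (hv : ¬InAmalg A B (sprod s a)) :
    RotatesOrLengthens A B ιH ιK (prodOf ιH ιK (c ++ [s])) (a :: l) := by
  refine ⟨c ++ sprod s a :: l ++ invRev (c ++ [s]),
    strictlyReduced_sandwich hc hx hsa (by simp [hsa]) hv, ?_, .inr ?_⟩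
  · simp [syl_sprod _ _ hsa]
    group
  · simp [invRev]
    omega

section Induction

variable (hG : IsAmalgam A B φ ιH ιK) (hA : A ≤ Subgroup.center H) (hB : B ≤ Subgroup.center K)
  {c : List (H ⊕ K)}
  (ih : ∀ x, StrictlyCyclicallyReduced A B x → RotatesOrLengthens A B ιH ιK (prodOf ιH ιK c) x)
include hG hA hB ih

theorem rotatesOrLengthens_append_singleton_cons {s a : H ⊕ K} {l : List (H ⊕ K)}
    (hc : StrictlyReduced A B (c ++ [s])) (hx : StrictlyCyclicallyReduced A B (a :: l))
    (hsa : s.isLeft = a.isLeft) :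
    RotatesOrLengthens A B ιH ιK (prodOf ιH ιK (c ++ [s])) (a :: l) := by
  by_cases hv : InAmalg A B (sprod s a)
  · have hrot := (List.isRotated_concat a l).symm
    rw [prodOf_append, prodOf_singleton]
    refine (ih _ (hx.rotated hrot)).mul_of_isRotated hrot ?_
    have hz := Subgroup.mem_center_iff.1 (hG.syl_mem_center hA hB hv)
    rw [syl_sprod _ _ hsa] at hz
    simp only [prodOf_append, prodOf_cons, prodOf_nil, mul_one]
    calc prodOf ιH ιK l * syl ιH ιK a
        = prodOf ιH ιK l * (syl ιH ιK s)⁻¹ * (syl ιH ιK s * syl ιH ιK a) := by group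
      _ = syl ιH ιK s * syl ιH ιK a * (prodOf ιH ιK l * (syl ιH ιK s)⁻¹) := hz _
      _ = syl ιH ιK s * (syl ιH ιK a * prodOf ιH ιK l) * (syl ιH ιK s)⁻¹ := by group
  · exact rotatesOrLengthens_of_not_inAmalg_sprod hc hx hsa hv

theorem rotatesOrLengthens_append_singleton_concat {s a : H ⊕ K} {l : List (H ⊕ K)}
    (hc : StrictlyReduced A B (c ++ [s])) (hx : StrictlyCyclicallyReduced A B (l ++ [a]))
    (hsa : s.isLeft = a.isLeft) :
    RotatesOrLengthens A B ιH ιK (prodOf ιH ιK (c ++ [s])) (l ++ [a]) := by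
  -- With `s = t a`: conjugating by `a` rotates `l ++ [a]` to `a :: l`, whose first syllable
  -- lies in the factor of `t`.
  have hrot := List.isRotated_concat a l
  have hx' := hx.rotated hrot
  set t := sprod s (sinv a)
  have hst : syl ιH ιK s = syl ιH ιK t * syl ιH ιK a := by
    rw [syl_sprod _ _ (by simp [hsa]), syl_sinv]
    group
  have key : RotatesOrLengthens A B ιH ιK (prodOf ιH ιK c * syl ιH ιK t) (a :: l) := by
    by_cases ht : InAmalg A B t
    · refine (ih _ hx').mul_of_isRotated (List.IsRotated.refl _) ?_
      rw [← Subgroup.mem_center_iff.1 (hG.syl_mem_center hA hB ht), mul_inv_cancel_right]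
    · have hct : StrictlyReduced A B (c ++ [t]) :=
        hc.of_map_isLeft_eq (by simp [t, hsa]) fun u hu => by
          rcases List.mem_append.1 hu with hu | hu
          exacts [hc.2 u (List.mem_append_left _ hu), List.mem_singleton.1 hu ▸ ht]
      simpa using rotatesOrLengthens_append_singleton_cons hG hA hB ih hct hx' (by simp [t, hsa])
  rw [prodOf_append, prodOf_singleton, hst, ← mul_assoc]
  exact key.mul_of_isRotated hrot (by simp; group)

end Induction

theorem _root_.IsAmalgam.rotatesOrLengthens (hG : IsAmalgam A B φ ιH ιK)
    (hA : A ≤ Subgroup.center H) (hB : B ≤ Subgroup.center K) {c x : List (H ⊕ K)}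
    (hc : StrictlyReduced A B c) (hx : StrictlyCyclicallyReduced A B x) :
    RotatesOrLengthens A B ιH ιK (prodOf ιH ιK c) x := by
  induction c using List.reverseRecOn generalizing x with
  | nil => exact ⟨x, hx.strictlyReduced, by simp, .inl (List.IsRotated.refl x)⟩
  | append_singleton c s ih =>
    replace ih := fun x hx => ih hc.left_of_append (x := x) hx
    rcases List.eq_nil_or_concat' x with rfl | ⟨l, b, rfl⟩
    · exact ⟨[], hx.strictlyReduced, by simp, .inl (List.IsRotated.refl [])⟩
    by_cases hsb : s.isLeft = b.isLeft
    · exact rotatesOrLengthens_append_singleton_concat hG hA hB ih hc hx hsb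
    rcases l with _ | ⟨a, l⟩
    · exact absurd hx StrictlyCyclicallyReduced.ne_singleton
    have hsa : s.isLeft = a.isLeft := by
      have hab := hx.isLeft_ne
      revert hsb hab
      cases s.isLeft <;> cases a.isLeft <;> cases b.isLeft <;> simp
    exact rotatesOrLengthens_append_singleton_cons hG hA hB ih hc hx hsa

end Conjugation

end AmalgamConj

open AmalgamConj in
/-- Conjugacy criterion in an amalgam over central subgroups: two cyclically reduced
elements of equal length `> 1` are conjugate iff one is a cyclic permutation of the
other. -/
theorem isConj_iff_cyclic_permutation {H K G : Type} [Group H] [Group K] [Group G]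
    (A : Subgroup H) (B : Subgroup K) (φ : A ≃* B)
    (hA : A ≤ Subgroup.center H) (hB : B ≤ Subgroup.center K)
    (ιH : H →* G) (ιK : K →* G) (hG : IsAmalgam A B φ ιH ιK)
    (Lx Ly : List (H ⊕ K))
    (hx : CyclicallyReduced A B Lx) (hy : CyclicallyReduced A B Ly)
    (hlen1 : 1 < Lx.length) (hlen : Lx.length = Ly.length) :
    IsConj (prodOf ιH ιK Lx) (prodOf ιH ιK Ly) ↔
      ∃ i : ℕ, prodOf ιH ιK (Lx.rotate i) = prodOf ιH ιK Ly := by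
  refine ⟨fun hconj => ?_, fun ⟨i, hi⟩ => hi ▸ isConj_prodOf_rotate ιH ιK Lx i⟩
  obtain ⟨g, hg⟩ := isConj_iff.1 hconj
  obtain ⟨z, hz, c, hc, rfl⟩ := hG.exists_center_mul_prodOf hA hB g
  obtain ⟨W, hW, hWp, hWx⟩ :=
    hG.rotatesOrLengthens hA hB hc (hx.strictlyCyclicallyReduced hlen1)
  have hWy : prodOf ιH ιK W = prodOf ιH ιK Ly := by
    have hzW := Subgroup.mem_center_iff.1 hz (prodOf ιH ιK W)
    calc prodOf ιH ιK W = z * prodOf ιH ιK W * z⁻¹ := by rw [← hzW, mul_inv_cancel_right]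
      _ = prodOf ιH ιK Ly := by rw [hWp, ← hg]; group
  rcases hWx with ⟨i, rfl⟩ | hlong
  · exact ⟨i, hWy⟩
  · have := hG.length_eq_of_prodOf_eq hW (hy.1.strictlyReduced (hlen ▸ hlen1)) hWy
    omega
end

section
/- Let R ⊴ H and S ⊴ K be (A,B,φ)-compatible normal subgroups. Then the quotient maps H → H/R and K → K/S extend to a surjective homomorphism ρ from the amalgamated free product G = (H * K; A = B, φ) onto the amalgamated free product G_{R,S} = (H/R * K/S; AR/R = BS/S, φ_{R,S}), where φ_{R,S}(aR) = (φ a)S. -/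
/-- Given `(A,B,φ)`-compatible normal subgroups `R ⊴ H` and `S ⊴ K`, the quotient maps
`H → H/R` and `K → K/S` extend to a surjective homomorphism from the amalgam
`G = (H * K; A = B, φ)` onto the amalgam `G_{R,S} = (H/R * K/S; AR/R = BS/S, φ_{R,S})`. -/
theorem exists_surjective_to_quotient_amalgam
    {H K G G' : Type} [Group H] [Group K] [Group G] [Group G']
    (A : Subgroup H) (B : Subgroup K) (φ : A ≃* B)
    (R : Subgroup H) (S : Subgroup K) [R.Normal] [S.Normal]
    (hcomp : Compatible A B φ R S)
    (ιH : H →* G) (ιK : K →* G) (hG : IsAmalgam A B φ ιH ιK)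
    (ιH' : H ⧸ R →* G') (ιK' : K ⧸ S →* G')
    (hG' : IsPushout ((QuotientGroup.mk' R).comp A.subtype)
      ((QuotientGroup.mk' S).comp (B.subtype.comp φ.toMonoidHom)) ιH' ιK') :
    ∃ ρ : G →* G', Function.Surjective ρ ∧
      ρ.comp ιH = ιH'.comp (QuotientGroup.mk' R) ∧
      ρ.comp ιK = ιK'.comp (QuotientGroup.mk' S) := by
  obtain ⟨ρ, ⟨hρH, hρK⟩, -⟩ := hG.2 G' (ιH'.comp (QuotientGroup.mk' R))
    (ιK'.comp (QuotientGroup.mk' S)) (fun a => hG'.1 a)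
  refine ⟨ρ, ?_, hρH, hρK⟩
  have hHmem : ∀ x : H ⧸ R, ιH' x ∈ ρ.range := by
    intro x
    obtain ⟨y, rfl⟩ := QuotientGroup.mk'_surjective R x
    exact ⟨ιH y, DFunLike.congr_fun hρH y⟩
  have hKmem : ∀ x : K ⧸ S, ιK' x ∈ ρ.range := by
    intro x
    obtain ⟨y, rfl⟩ := QuotientGroup.mk'_surjective S x
    exact ⟨ιK y, DFunLike.congr_fun hρK y⟩
  obtain ⟨σ, ⟨hσH, hσK⟩, -⟩ := hG'.2 ρ.range (ιH'.codRestrict ρ.range hHmem)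
    (ιK'.codRestrict ρ.range hKmem) (fun a => Subtype.ext (hG'.1 a))
  obtain ⟨τ, -, huniq⟩ := hG'.2 G' ιH' ιK' hG'.1
  have h1 : ρ.range.subtype.comp σ = MonoidHom.id G' := by
    have e1 : ρ.range.subtype.comp σ = _ := huniq (ρ.range.subtype.comp σ)
      ⟨by rw [MonoidHom.comp_assoc, hσH]; ext x; simp,
       by rw [MonoidHom.comp_assoc, hσK]; ext x; simp⟩
    have e2 : MonoidHom.id G' = _ := huniq (MonoidHom.id G')
      ⟨by ext x; simp, by ext x; simp⟩
    rw [e1, e2]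
  intro g
  obtain ⟨x, hx⟩ := (σ g).2
  exact ⟨x, hx.trans (DFunLike.congr_fun h1 g)⟩
end
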